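/- For any H-module algebra R, the H-Baer radical r_{Hb}(R) equals W_H(R), the set of all H-m-nilpotent elements of R. -/

import Mathlib

open scoped TensorProduct

class HModAlg (k H R : Type*) [CommRing k] [Ring H] [Algebra k H]
    [Coalgebra k H] [NonUnitalRing R] [Module k R]
    [SMulCommClass k R R] [IsScalarTower k R R] where
  hsmul : H →ₗ[k] R →ₗ[k] R
  one_hsmul : ∀ r : R, hsmul 1 r = r
  mul_hsmul : ∀ (h h' : H) (r : R), hsmul (h * h') r = hsmul h (hsmul h' r)
  hsmul_mul : ∀ (h : H) (a b : R),
    hsmul h (a * b) =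
      LinearMap.mul' k R
        (TensorProduct.map (hsmul.flip a) (hsmul.flip b) (Coalgebra.comul h))

/-- product f 0 * f 1 * ⋯ * f n -/
def prodSeq {R : Type*} [Mul R] (f : ℕ → R) : ℕ → R
  | 0 => f 0
  | n + 1 => prodSeq f n * f (n + 1)

/-- `I` is a nilpotent subset: some power of it vanishes. -/
def IsNilpotentSet {R : Type*} [Mul R] [Zero R] (I : Set R) : Prop :=
  ∃ n : ℕ, ∀ f : ℕ → R, (∀ i, f i ∈ I) → prodSeq f n = 0

/-- `I` is nilpotent modulo `J`. -/
def IsNilpotentSetMod {R : Type*} [Mul R] (I J : Set R) : Prop :=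
  ∃ n : ℕ, ∀ f : ℕ → R, (∀ i, f i ∈ I) → prodSeq f n ∈ J

section Defs

variable (k H : Type*) {R : Type*} [CommRing k] [Ring H] [Algebra k H]
  [Coalgebra k H] [NonUnitalRing R] [Module k R]
  [SMulCommClass k R R] [IsScalarTower k R R] [HModAlg k H R]

/-- The action of `h : H` on `r : R`. -/
def hact (h : H) (r : R) : R := HModAlg.hsmul (k := k) h r

/-- `I` is an `H`-ideal of the `H`-module (sub)algebra `B ⊆ R`. -/
structure IsHIdealIn (B I : Set R) : Prop where
  subset : I ⊆ B
  zero_mem : (0 : R) ∈ I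
  add_mem : ∀ {x y : R}, x ∈ I → y ∈ I → x + y ∈ I
  neg_mem : ∀ {x : R}, x ∈ I → -x ∈ I
  mul_mem_left : ∀ {x : R}, x ∈ B → ∀ {y : R}, y ∈ I → x * y ∈ I
  mul_mem_right : ∀ {x : R}, x ∈ I → ∀ {y : R}, y ∈ B → x * y ∈ I
  hsmul_mem : ∀ (h : H) {x : R}, x ∈ I → hact k H h x ∈ I

/-- `I` is an `H`-ideal of `R`. -/
def IsHIdeal (I : Set R) : Prop := IsHIdealIn k H Set.univ I

/-- `R` is `H`-semiprime. -/
def IsHSemiprime : Prop :=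
  ∀ I : Set R, IsHIdeal k H I → IsNilpotentSet I → I = {0}

/-- The subalgebra `B` of `R` is `H`-semiprime. -/
def IsHSemiprimeIn (B : Set R) : Prop :=
  ∀ I : Set R, IsHIdealIn k H B I → IsNilpotentSet I → I = {0}

/-- `R` is `H`-prime. -/
def IsHPrime : Prop :=
  ∀ I J : Set R, IsHIdeal k H I → IsHIdeal k H J →
    (∀ a ∈ I, ∀ b ∈ J, a * b = 0) → I = {0} ∨ J = {0}

/-- The `H`-ideal of `R` generated by `E`. -/
def genHIdeal (E : Set R) : Set R := ⋂₀ {I : Set R | IsHIdeal k H I ∧ E ⊆ I}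

end Defs


section Radical

variable (k H : Type*) {R : Type*} [CommRing k] [Ring H] [Algebra k H]
  [Coalgebra k H] [NonUnitalRing R] [Module k R]
  [SMulCommClass k R R] [IsScalarTower k R R] [HModAlg k H R]

/-- The `H`-ideal `I` is a radical (`r_{Hb}`-) `H`-ideal: every non-zero
`H`-homomorphic image of `I` (equivalently, every quotient `I/J` of `I` by a proper
`H`-ideal `J` of `I`) contains a non-zero nilpotent `H`-ideal `K/J`. -/
def IsRadicalHIdeal (I : Set R) : Prop :=
  IsHIdeal k H I ∧
    ∀ J : Set R, IsHIdealIn k H I J → J ≠ I →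
      ∃ K : Set R, IsHIdealIn k H I K ∧ J ⊆ K ∧ J ≠ K ∧ IsNilpotentSetMod K J

/-- `B` is the `H`-Baer radical of `R`: the largest radical `H`-ideal of `R`. -/
def IsHBaerRadical (B : Set R) : Prop :=
  IsRadicalHIdeal k H B ∧ ∀ I : Set R, IsRadicalHIdeal k H I → I ⊆ B

end Radical

/-- The set `W_H(R)` of `H`-`m`-nilpotent elements. -/
def WHset (k H : Type*) {R : Type*} [CommRing k] [Ring H] [Algebra k H]
    [Coalgebra k H] [NonUnitalRing R] [Module k R] [SMulCommClass k R R]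
    [IsScalarTower k R R] [HModAlg k H R] : Set R :=
  {a : R | ∀ (s b : ℕ → R) (h h' : ℕ → H), s 0 = a →
    (∀ n, s (n + 1) = hact k H (h n) (s n) * b n * hact k H (h' n) (s n)) →
    ∃ n, s n = 0}

/-!
Call an `H`-ideal `P` prime when `Q R Q' ⊆ P` forces `Q ⊆ P` or `Q' ⊆ P` for `H`-ideals `Q, Q'`.
An element outside a prime starts an `m`-sequence avoiding it, and an `H`-ideal maximal among
those missing a nowhere-zero `m`-sequence is prime; so `W_H(R)` is the intersection of the primes,
in particular an `H`-ideal.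

A radical `H`-ideal `I` lies in every prime `P`: otherwise `I / (P ∩ I)` contains a non-zero
nilpotent `H`-ideal `K / (P ∩ I)`, and the `H`-ideal of `R` generated by `K` is then nilpotent
modulo `P`, which a prime forbids. Conversely `W_H(R)` is radical: for a proper `H`-ideal `J` of
`W_H(R)` some `a ∈ W_H(R) \ J` has every `(g·a) r (g'·a)` in `J` (otherwise an `m`-sequence from
`a` avoids `J`), and the cube of `J` plus the ideal of `W_H(R)` generated by `H·a` lies in `J`.
-/

open Pointwise

section HAction

variable {k H R : Type*} [CommRing k] [Ring H] [Algebra k H] [Coalgebra k H]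
  [NonUnitalRing R] [Module k R] [SMulCommClass k R R] [IsScalarTower k R R] [HModAlg k H R]

lemma hact_zero (h : H) : hact k H h (0 : R) = 0 := map_zero _

lemma hact_add (h : H) (x y : R) : hact k H h (x + y) = hact k H h x + hact k H h y :=
  map_add _ _ _

lemma hact_neg (h : H) (x : R) : hact k H h (-x) = -hact k H h x := map_neg _ _

lemma hact_one (x : R) : hact k H 1 x = x := HModAlg.one_hsmul x

lemma hact_hact (g h : H) (x : R) : hact k H g (hact k H h x) = hact k H (g * h) x :=
  (HModAlg.mul_hsmul g h x).symm

/-- `h·(xy) = ∑ (h₁·x)(h₂·y)` where `Δ h = ∑ h₁ ⊗ h₂`. -/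
lemma hact_mul_mem (G : AddSubgroup R) {x y : R}
    (hxy : ∀ g g' : H, hact k H g x * hact k H g' y ∈ G) (h : H) :
    hact k H h (x * y) ∈ G := by
  change HModAlg.hsmul h (x * y) ∈ G
  rw [HModAlg.hsmul_mul]
  induction Coalgebra.comul (R := k) h using TensorProduct.induction_on with
  | zero => simp
  | tmul p q => simpa [hact] using hxy p q
  | add u v hu hv => rw [map_add, map_add]; exact add_mem hu hv

variable (k H) in
def hOrbit (x : R) : Set R := Set.range fun g : H => hact k H g x

lemma mem_hOrbit_self (x : R) : x ∈ hOrbit k H x := ⟨1, hact_one x⟩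

lemma hact_mem_hOrbit (h : H) {x c : R} (hc : c ∈ hOrbit k H x) : hact k H h c ∈ hOrbit k H x := by
  obtain ⟨g, rfl⟩ := hc
  exact ⟨h * g, (hact_hact h g x).symm⟩

end HAction

section IdealSpan

variable {R : Type*} [NonUnitalRing R]

/-- For a subring `U ⊇ C`, this is the ideal of `U` generated by `C`. -/
def idealSpan (U C : Set R) : AddSubgroup R :=
  sInf {G | C ⊆ G ∧ ∀ u ∈ U, ∀ x ∈ G, u * x ∈ G ∧ x * u ∈ G}

variable {U C : Set R}

lemma subset_idealSpan : C ⊆ idealSpan U C :=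
  fun _ hc => AddSubgroup.mem_sInf.2 fun _ hG => hG.1 hc

lemma mul_mem_idealSpan_left {u x : R} (hu : u ∈ U) (hx : x ∈ idealSpan U C) :
    u * x ∈ idealSpan U C :=
  AddSubgroup.mem_sInf.2 fun G hG => (hG.2 u hu x (AddSubgroup.mem_sInf.1 hx G hG)).1

lemma mul_mem_idealSpan_right {u x : R} (hu : u ∈ U) (hx : x ∈ idealSpan U C) :
    x * u ∈ idealSpan U C :=
  AddSubgroup.mem_sInf.2 fun G hG => (hG.2 u hu x (AddSubgroup.mem_sInf.1 hx G hG)).2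

@[elab_as_elim]
lemma idealSpan_induction {p : (x : R) → x ∈ idealSpan U C → Prop}
    (mem : ∀ c (hc : c ∈ C), p c (subset_idealSpan hc)) (zero : p 0 (zero_mem _))
    (add : ∀ x y hx hy, p x hx → p y hy → p (x + y) (add_mem hx hy))
    (neg : ∀ x hx, p x hx → p (-x) (neg_mem hx))
    (mul_left : ∀ u (hu : u ∈ U) x hx, p x hx → p (u * x) (mul_mem_idealSpan_left hu hx))
    (mul_right : ∀ u (hu : u ∈ U) x hx, p x hx → p (x * u) (mul_mem_idealSpan_right hu hx))
    {x : R} (hx : x ∈ idealSpan U C) : p x hx := by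
  let G : AddSubgroup R :=
    { carrier := {x | ∃ hx, p x hx}
      zero_mem' := ⟨_, zero⟩
      add_mem' := fun ⟨_, hx⟩ ⟨_, hy⟩ => ⟨_, add _ _ _ _ hx hy⟩
      neg_mem' := fun ⟨_, hx⟩ => ⟨_, neg _ _ hx⟩ }
  obtain ⟨_, h⟩ := AddSubgroup.mem_sInf.1 hx G ⟨fun c hc => ⟨_, mem c hc⟩, fun u hu x ⟨_, hx⟩ =>
    ⟨⟨_, mul_left u hu x _ hx⟩, ⟨_, mul_right u hu x _ hx⟩⟩⟩
  exact h

lemma mul_mul_mem_of_mem_idealSpan {C₁ C₂ : Set R} (P : AddSubgroup R)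
    (hUP : ∀ u ∈ U, ∀ x ∈ P, u * x ∈ P) (hPU : ∀ x ∈ P, ∀ u ∈ U, x * u ∈ P)
    (hC : ∀ c₁ ∈ C₁, ∀ r, ∀ c₂ ∈ C₂, c₁ * r * c₂ ∈ P)
    {q q' : R} (hq : q ∈ idealSpan U C₁) (r : R) (hq' : q' ∈ idealSpan U C₂) :
    q * r * q' ∈ P := by
  have hC₁ : ∀ c₁ ∈ C₁, ∀ r, c₁ * r * q' ∈ P := by
    induction hq' using idealSpan_induction with
    | mem c₂ hc₂ => exact fun c₁ hc₁ r => hC c₁ hc₁ r c₂ hc₂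
    | zero => simp
    | add _ _ _ _ hx hy => simpa [mul_add] using fun c₁ hc₁ r => add_mem (hx c₁ hc₁ r) (hy c₁ hc₁ r)
    | neg _ _ hx => simpa [mul_neg] using hx
    | mul_left u hu _ _ hx => simpa [mul_assoc] using fun c₁ hc₁ r => hx c₁ hc₁ (r * u)
    | mul_right u hu _ _ hx =>
      simpa [← mul_assoc] using fun c₁ hc₁ r => hPU _ (hx c₁ hc₁ r) u hu
  induction hq using idealSpan_induction generalizing r with
  | mem c₁ hc₁ => exact hC₁ c₁ hc₁ r
  | zero => simp
  | add _ _ _ _ hx hy => simpa [add_mul] using add_mem (hx r) (hy r)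
  | neg _ _ hx => simpa [neg_mul] using hx r
  | mul_left u hu _ _ hx => simpa [mul_assoc] using hUP u hu _ (hx r)
  | mul_right u _ _ _ hx => simpa [mul_assoc] using hx (u * r)

end IdealSpan

section ProductSpans

variable {R : Type*} [NonUnitalRing R]

lemma prodSeq_succ (f : ℕ → R) (n : ℕ) : prodSeq f (n + 1) = prodSeq f n * f (n + 1) := rfl

lemma prodSeq_congr {f g : ℕ → R} {m : ℕ} (h : ∀ i ≤ m, f i = g i) :
    prodSeq f m = prodSeq g m := by
  induction m with
  | zero => exact h 0 le_rfl
  | succ m ih => rw [prodSeq_succ, prodSeq_succ, ih fun i hi => h i (by omega), h (m + 1) le_rfl]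

lemma prodSeq_update_succ (f : ℕ → R) (m : ℕ) (x : R) :
    prodSeq (Function.update f (m + 1) x) (m + 1) = prodSeq f m * x := by
  rw [prodSeq_succ, Function.update_self,
    prodSeq_congr (g := f) fun i hi => Function.update_of_ne (by omega) _ _]

lemma prodSeq_three_mul_add_two (f : ℕ → R) (n : ℕ) :
    prodSeq f (3 * n + 2) = prodSeq (fun i => f (3 * i) * f (3 * i + 1) * f (3 * i + 2)) n := by
  induction n with
  | zero => rfl
  | succ n ih =>
    rw [show 3 * (n + 1) + 2 = 3 * n + 2 + 1 + 1 + 1 by ring, prodSeq_succ, prodSeq_succ,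
      prodSeq_succ, ih, prodSeq_succ]
    simp only [mul_assoc, show 3 * (n + 1) = 3 * n + 2 + 1 by ring]

def prodSpan (E : Set R) (m : ℕ) : AddSubgroup R :=
  AddSubgroup.closure {x | ∃ f : ℕ → R, (∀ i, f i ∈ E) ∧ prodSeq f m = x}

variable {E : Set R}

lemma subset_prodSpan_zero : E ⊆ prodSpan E 0 :=
  fun x hx => AddSubgroup.subset_closure ⟨fun _ => x, fun _ => hx, rfl⟩

lemma mul_mem_prodSpan_succ {m : ℕ} {x e : R} (hx : x ∈ prodSpan E m) (he : e ∈ E) :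
    x * e ∈ prodSpan E (m + 1) := by
  induction hx using AddSubgroup.closure_induction with
  | mem _ hy =>
    obtain ⟨f, hf, rfl⟩ := hy
    exact AddSubgroup.subset_closure ⟨_, (Function.forall_update_iff f fun _ y => y ∈ E).2
      ⟨he, fun i _ => hf i⟩, prodSeq_update_succ f m e⟩
  | zero => simp
  | add _ _ _ _ hy hz => simpa [add_mul] using add_mem hy hz
  | neg _ _ hy => simpa [neg_mul] using hy

lemma mul_prodSeq_mem_prodSpan {p : ℕ} {x : R} (hx : x ∈ prodSpan E p) {g : ℕ → R}
    (hg : ∀ i, g i ∈ E) (q : ℕ) : x * prodSeq g q ∈ prodSpan E (p + q + 1) := by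
  induction q with
  | zero => exact mul_mem_prodSpan_succ hx (hg 0)
  | succ q ih =>
    rw [prodSeq_succ, ← mul_assoc, show p + (q + 1) + 1 = p + q + 1 + 1 by omega]
    exact mul_mem_prodSpan_succ ih (hg _)

lemma mul_mem_prodSpan {p q : ℕ} {x y : R} (hx : x ∈ prodSpan E p) (hy : y ∈ prodSpan E q) :
    x * y ∈ prodSpan E (p + q + 1) := by
  induction hy using AddSubgroup.closure_induction with
  | mem _ hy =>
    obtain ⟨g, hg, rfl⟩ := hy
    exact mul_prodSeq_mem_prodSpan hx hg q
  | zero => simp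
  | add _ _ _ _ hy hz => simpa [mul_add] using add_mem hy hz
  | neg _ _ hy => simpa [mul_neg] using hy

lemma prodSpan_le {G : AddSubgroup R} (hG : ∀ x ∈ G, ∀ r, x * r ∈ G) {n m : ℕ}
    (hE : ∀ f : ℕ → R, (∀ i, f i ∈ E) → prodSeq f n ∈ G) (hnm : n ≤ m) : prodSpan E m ≤ G := by
  refine (AddSubgroup.closure_le _).2 ?_
  rintro _ ⟨f, hf, rfl⟩
  induction m, hnm using Nat.le_induction with
  | base => exact hE f hf
  | succ m _ ih => exact hG _ ih _

def sqSpan (G : AddSubgroup R) : AddSubgroup R := AddSubgroup.closure ((G : Set R) * G)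

lemma sqSpan_iterate_le_prodSpan {G : AddSubgroup R} (hG : G ≤ prodSpan E 0) (j : ℕ) :
    ∃ m ≥ j, sqSpan^[j] G ≤ prodSpan E m := by
  induction j with
  | zero => exact ⟨0, le_rfl, hG⟩
  | succ j ih =>
    obtain ⟨m, hjm, hle⟩ := ih
    refine ⟨m + m + 1, by omega, ?_⟩
    rw [Function.iterate_succ_apply', sqSpan, AddSubgroup.closure_le]
    rintro _ ⟨x, hx, y, hy, rfl⟩
    exact mul_mem_prodSpan (hle hx) (hle hy)

end ProductSpans

section HIdeals

variable {k H R : Type*} [CommRing k] [Ring H] [Algebra k H] [Coalgebra k H]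
  [NonUnitalRing R] [Module k R] [SMulCommClass k R R] [IsScalarTower k R R] [HModAlg k H R]

namespace IsHIdealIn

variable {B I J : Set R}

def toAddSubgroup (hI : IsHIdealIn k H B I) : AddSubgroup R where
  carrier := I
  zero_mem' := hI.zero_mem
  add_mem' := hI.add_mem
  neg_mem' := hI.neg_mem

lemma add (hB : ∀ x ∈ B, ∀ y ∈ B, x + y ∈ B) (hI : IsHIdealIn k H B I)
    (hJ : IsHIdealIn k H B J) : IsHIdealIn k H B (I + J) where
  subset := by
    rintro _ ⟨x, hx, y, hy, rfl⟩
    exact hB x (hI.subset hx) y (hJ.subset hy)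
  zero_mem := ⟨0, hI.zero_mem, 0, hJ.zero_mem, add_zero 0⟩
  add_mem := by
    rintro _ _ ⟨x, hx, y, hy, rfl⟩ ⟨x', hx', y', hy', rfl⟩
    exact ⟨x + x', hI.add_mem hx hx', y + y', hJ.add_mem hy hy', add_add_add_comm ..⟩
  neg_mem := by
    rintro _ ⟨x, hx, y, hy, rfl⟩
    exact ⟨-x, hI.neg_mem hx, -y, hJ.neg_mem hy, (neg_add ..).symm⟩
  mul_mem_left := by
    rintro u hu _ ⟨x, hx, y, hy, rfl⟩
    exact ⟨u * x, hI.mul_mem_left hu hx, u * y, hJ.mul_mem_left hu hy, (mul_add ..).symm⟩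
  mul_mem_right := by
    rintro _ ⟨x, hx, y, hy, rfl⟩ u hu
    exact ⟨x * u, hI.mul_mem_right hx hu, y * u, hJ.mul_mem_right hy hu, (add_mul ..).symm⟩
  hsmul_mem := by
    rintro h _ ⟨x, hx, y, hy, rfl⟩
    exact ⟨_, hI.hsmul_mem h hx, _, hJ.hsmul_mem h hy, (hact_add ..).symm⟩

end IsHIdealIn

namespace IsHIdeal

variable {I P : Set R}

lemma zero_mem (hI : IsHIdeal k H I) : (0 : R) ∈ I := IsHIdealIn.zero_mem hI

lemma add_mem (hI : IsHIdeal k H I) {x y : R} (hx : x ∈ I) (hy : y ∈ I) : x + y ∈ I :=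
  IsHIdealIn.add_mem hI hx hy

lemma neg_mem (hI : IsHIdeal k H I) {x : R} (hx : x ∈ I) : -x ∈ I := IsHIdealIn.neg_mem hI hx

lemma mul_mem_left (hI : IsHIdeal k H I) (x : R) {y : R} (hy : y ∈ I) : x * y ∈ I :=
  IsHIdealIn.mul_mem_left hI trivial hy

lemma mul_mem_right (hI : IsHIdeal k H I) {x : R} (hx : x ∈ I) (y : R) : x * y ∈ I :=
  IsHIdealIn.mul_mem_right hI hx trivial

lemma hsmul_mem (hI : IsHIdeal k H I) (h : H) {x : R} (hx : x ∈ I) : hact k H h x ∈ I :=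
  IsHIdealIn.hsmul_mem hI h hx

lemma add (hI : IsHIdeal k H I) (hP : IsHIdeal k H P) : IsHIdeal k H (I + P) :=
  IsHIdealIn.add (fun _ _ _ _ => trivial) hI hP

lemma inter (hP : IsHIdeal k H P) (hI : IsHIdeal k H I) : IsHIdealIn k H I (P ∩ I) where
  subset := Set.inter_subset_right
  zero_mem := ⟨hP.zero_mem, hI.zero_mem⟩
  add_mem hx hy := ⟨hP.add_mem hx.1 hy.1, hI.add_mem hx.2 hy.2⟩
  neg_mem hx := ⟨hP.neg_mem hx.1, hI.neg_mem hx.2⟩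
  mul_mem_left {x} _ _ hy := ⟨hP.mul_mem_left x hy.1, hI.mul_mem_left x hy.2⟩
  mul_mem_right hx y _ := ⟨hP.mul_mem_right hx.1 y, hI.mul_mem_right hx.2 y⟩
  hsmul_mem h _ hx := ⟨hP.hsmul_mem h hx.1, hI.hsmul_mem h hx.2⟩

lemma idealSpan_subset {U C : Set R} (hI : IsHIdeal k H I) (hCI : C ⊆ I) :
    (idealSpan U C : Set R) ⊆ I :=
  fun _ hx => AddSubgroup.mem_sInf.1 hx (IsHIdealIn.toAddSubgroup hI)
    ⟨hCI, fun u _ _ hx => ⟨hI.mul_mem_left u hx, hI.mul_mem_right hx u⟩⟩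

end IsHIdeal

variable (k H) in
lemma isHIdeal_univ : IsHIdeal k H (Set.univ : Set R) :=
  ⟨le_rfl, trivial, fun _ _ => trivial, fun _ => trivial, fun _ _ _ => trivial,
    fun _ _ _ => trivial, fun _ _ _ => trivial⟩

variable (k H) in
lemma isHIdeal_zero : IsHIdeal k H ({0} : Set R) where
  subset := Set.subset_univ _
  zero_mem := rfl
  add_mem hx hy := by simp_all
  neg_mem hx := by simp_all
  mul_mem_left _ _ hy := by simp_all
  mul_mem_right hx _ _ := by simp_all
  hsmul_mem _ _ hx := by simp_all [hact_zero]

lemma isHIdeal_sInter {S : Set (Set R)} (hS : ∀ I ∈ S, IsHIdeal k H I) :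
    IsHIdeal k H (⋂₀ S) where
  subset := Set.subset_univ _
  zero_mem I hI := (hS I hI).zero_mem
  add_mem hx hy I hI := (hS I hI).add_mem (hx I hI) (hy I hI)
  neg_mem hx I hI := (hS I hI).neg_mem (hx I hI)
  mul_mem_left {x} _ _ hy I hI := (hS I hI).mul_mem_left x (hy I hI)
  mul_mem_right hx y _ I hI := (hS I hI).mul_mem_right (hx I hI) y
  hsmul_mem h _ hx I hI := (hS I hI).hsmul_mem h (hx I hI)

lemma isHIdeal_sUnion {c : Set (Set R)} (hc : ∀ I ∈ c, IsHIdeal k H I)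
    (hchain : IsChain (· ⊆ ·) c) (hne : c.Nonempty) : IsHIdeal k H (⋃₀ c) where
  subset := Set.subset_univ _
  zero_mem := hne.elim fun I hI => ⟨I, hI, (hc I hI).zero_mem⟩
  add_mem := by
    rintro x y ⟨I, hI, hx⟩ ⟨J, hJ, hy⟩
    obtain ⟨L, hL, hIL, hJL⟩ := hchain.directedOn I hI J hJ
    exact ⟨L, hL, (hc L hL).add_mem (hIL hx) (hJL hy)⟩
  neg_mem := fun ⟨I, hI, hx⟩ => ⟨I, hI, (hc I hI).neg_mem hx⟩
  mul_mem_left {x} _ _ := fun ⟨I, hI, hy⟩ => ⟨I, hI, (hc I hI).mul_mem_left x hy⟩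
  mul_mem_right {_} := fun ⟨I, hI, hx⟩ y _ => ⟨I, hI, (hc I hI).mul_mem_right hx y⟩
  hsmul_mem h _ := fun ⟨I, hI, hx⟩ => ⟨I, hI, (hc I hI).hsmul_mem h hx⟩

lemma exists_maximal_isHIdeal_disjoint {S : Set R} (h0 : (0 : R) ∉ S) :
    ∃ P, Maximal (fun I => IsHIdeal k H I ∧ Disjoint I S) P := by
  obtain ⟨P, -, hP⟩ := zorn_subset_nonempty {I | IsHIdeal k H I ∧ Disjoint I S}
    (fun c hc hchain hne => ⟨⋃₀ c,
      ⟨isHIdeal_sUnion (fun I hI => (hc hI).1) hchain hne,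
        Set.disjoint_sUnion_left.2 fun I hI => (hc hI).2⟩,
      fun _ => Set.subset_sUnion_of_mem⟩)
    {0} ⟨isHIdeal_zero k H, Set.disjoint_singleton_left.2 h0⟩
  exact ⟨P, hP⟩

lemma hact_mem_idealSpan {U C : Set R} (hU : ∀ h : H, ∀ u ∈ U, hact k H h u ∈ U)
    (hC : ∀ h : H, ∀ c ∈ C, hact k H h c ∈ C) {x : R} (hx : x ∈ idealSpan U C) (h : H) :
    hact k H h x ∈ idealSpan U C := by
  induction hx using idealSpan_induction generalizing h with
  | mem c hc => exact subset_idealSpan (hC h c hc)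
  | zero => rw [hact_zero]; exact zero_mem _
  | add x y _ _ hx hy => rw [hact_add]; exact add_mem (hx h) (hy h)
  | neg x _ hx => rw [hact_neg]; exact neg_mem (hx h)
  | mul_left u hu x _ hx =>
    exact hact_mul_mem _ (fun g g' => mul_mem_idealSpan_left (hU g u hu) (hx g')) h
  | mul_right u hu x _ hx =>
    exact hact_mul_mem _ (fun g g' => mul_mem_idealSpan_right (hU g' u hu) (hx g)) h

lemma isHIdealIn_idealSpan {B C : Set R} (hB : IsHIdeal k H B) (hCB : C ⊆ B)
    (hC : ∀ h : H, ∀ c ∈ C, hact k H h c ∈ C) : IsHIdealIn k H B (idealSpan B C) where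
  subset := hB.idealSpan_subset hCB
  zero_mem := zero_mem _
  add_mem := add_mem
  neg_mem := neg_mem
  mul_mem_left hu _ hx := mul_mem_idealSpan_left hu hx
  mul_mem_right hx _ hu := mul_mem_idealSpan_right hu hx
  hsmul_mem h _ hx := hact_mem_idealSpan (fun h _ hu => hB.hsmul_mem h hu) hC hx h

lemma isHIdeal_sqSpan {G : AddSubgroup R} (hG : IsHIdeal k H (G : Set R)) :
    IsHIdeal k H (sqSpan G : Set R) where
  subset := Set.subset_univ _
  zero_mem := zero_mem _
  add_mem := add_mem
  neg_mem := neg_mem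
  mul_mem_left {x} _ {_} hy := by
    induction hy using AddSubgroup.closure_induction with
    | mem _ hw =>
      obtain ⟨u, hu, v, hv, rfl⟩ := hw
      exact AddSubgroup.subset_closure ⟨x * u, hG.mul_mem_left x hu, v, hv, mul_assoc ..⟩
    | zero => simp
    | add _ _ _ _ ha hb => simpa [mul_add] using add_mem ha hb
    | neg _ _ ha => simpa [mul_neg] using ha
  mul_mem_right {_} hx y _ := by
    induction hx using AddSubgroup.closure_induction with
    | mem _ hw =>
      obtain ⟨u, hu, v, hv, rfl⟩ := hw
      exact AddSubgroup.subset_closure ⟨u, hu, v * y, hG.mul_mem_right hv y, (mul_assoc ..).symm⟩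
    | zero => simp
    | add _ _ _ _ ha hb => simpa [add_mul] using add_mem ha hb
    | neg _ _ ha => simpa [neg_mul] using ha
  hsmul_mem h _ hx := by
    induction hx using AddSubgroup.closure_induction with
    | mem _ hw =>
      obtain ⟨u, hu, v, hv, rfl⟩ := hw
      exact hact_mul_mem _ (fun g g' => AddSubgroup.subset_closure
        (Set.mul_mem_mul (hG.hsmul_mem g hu) (hG.hsmul_mem g' hv))) h
    | zero => rw [hact_zero]; exact zero_mem _
    | add _ _ _ _ ha hb => rw [hact_add]; exact add_mem ha hb
    | neg _ _ ha => rw [hact_neg]; exact neg_mem ha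

end HIdeals

section Primes

variable {k H R : Type*} [CommRing k] [Ring H] [Algebra k H] [Coalgebra k H]
  [NonUnitalRing R] [Module k R] [SMulCommClass k R R] [IsScalarTower k R R] [HModAlg k H R]

variable (k H) in
/-- Primeness with respect to `Q R Q'` rather than `Q Q'`, matching the shape of `m`-sequences. -/
structure IsHPrimeIdeal (P : Set R) : Prop where
  isHIdeal : IsHIdeal k H P
  subset_or_subset : ∀ {Q Q' : Set R}, IsHIdeal k H Q → IsHIdeal k H Q' →
    (∀ q ∈ Q, ∀ r : R, ∀ q' ∈ Q', q * r * q' ∈ P) → Q ⊆ P ∨ Q' ⊆ P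

namespace IsHPrimeIdeal

variable {P : Set R}

lemma exists_hact_mul_hact_notMem (hP : IsHPrimeIdeal k H P) {x y : R} (hx : x ∉ P)
    (hy : y ∉ P) : ∃ (g : H) (r : R) (g' : H), hact k H g x * r * hact k H g' y ∉ P := by
  by_contra! hxy
  have hspan (z : R) : IsHIdeal k H (idealSpan Set.univ (hOrbit k H z) : Set R) :=
    isHIdealIn_idealSpan (isHIdeal_univ k H) (Set.subset_univ _) fun h _ hc => hact_mem_hOrbit h hc
  have hPid := hP.isHIdeal
  rcases hP.subset_or_subset (hspan x) (hspan y) fun q hq r q' hq' =>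
      mul_mul_mem_of_mem_idealSpan (IsHIdealIn.toAddSubgroup hPid)
        (fun u _ _ hz => hPid.mul_mem_left u hz) (fun _ hz u _ => hPid.mul_mem_right hz u)
        (by rintro _ ⟨g, rfl⟩ r _ ⟨g', rfl⟩; exact hxy g r g') hq r hq' with h | h
  · exact hx (h (subset_idealSpan (mem_hOrbit_self x)))
  · exact hy (h (subset_idealSpan (mem_hOrbit_self y)))

lemma subset_of_isNilpotentSetMod (hP : IsHPrimeIdeal k H P) {A : Set R}
    (hA : IsHIdeal k H A) (hnil : IsNilpotentSetMod A P) : A ⊆ P := by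
  obtain ⟨n, hn⟩ := hnil
  by_contra hAP
  set G := IsHIdealIn.toAddSubgroup hA
  -- The iterated squares of `A` stay outside `P`, but the `n`-th one is spanned by products of
  -- at least `n + 1` elements of `A`.
  have hpow (j : ℕ) : IsHIdeal k H (sqSpan^[j] G : Set R) ∧ ¬(sqSpan^[j] G : Set R) ⊆ P := by
    induction j with
    | zero => exact ⟨hA, hAP⟩
    | succ j ih =>
      obtain ⟨hj, hjP⟩ := ih
      rw [Function.iterate_succ_apply']
      refine ⟨isHIdeal_sqSpan hj, fun hsub => hjP ?_⟩
      refine (hP.subset_or_subset hj hj fun q hq r q' hq' => hsub ?_).elim id id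
      exact AddSubgroup.subset_closure (Set.mul_mem_mul (hj.mul_mem_right hq r) hq')
  obtain ⟨m, hnm, hle⟩ := sqSpan_iterate_le_prodSpan (E := A) (G := G) subset_prodSpan_zero n
  have hPid := hP.isHIdeal
  exact (hpow n).2 (hle.trans (prodSpan_le (G := IsHIdealIn.toAddSubgroup hPid)
    (fun _ hx r => hPid.mul_mem_right hx r) hn hnm))

end IsHPrimeIdeal

variable (k H) in
def IsHMSeq (s : ℕ → R) : Prop :=
  ∀ n, ∃ (g : H) (r : R) (g' : H), s (n + 1) = hact k H g (s n) * r * hact k H g' (s n)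

lemma mem_WHset_iff {a : R} :
    a ∈ WHset k H ↔ ∀ s, s 0 = a → IsHMSeq k H s → ∃ n, s n = 0 := by
  constructor
  · intro ha s hs0 hs
    choose g r g' hs using hs
    exact ha s r g g' hs0 hs
  · intro ha s b h h' hs0 hs
    exact ha s hs0 fun n => ⟨h n, b n, h' n, hs n⟩

lemma IsHMSeq.mem_of_le {s : ℕ → R} (hs : IsHMSeq k H s) {A : Set R} (hA : IsHIdeal k H A)
    {i j : ℕ} (hi : s i ∈ A) (hij : i ≤ j) : s j ∈ A := by
  induction j, hij using Nat.le_induction with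
  | base => exact hi
  | succ j _ ih =>
    obtain ⟨g, r, g', hj⟩ := hs j
    rw [hj]
    exact hA.mul_mem_right (hA.mul_mem_right (hA.hsmul_mem g ih) r) _

lemma notMem_WHset_of_forall_exists {p : R → Prop} {a : R} (ha : p a) (h0 : ¬p 0)
    (step : ∀ x, p x → ∃ (g : H) (r : R) (g' : H), p (hact k H g x * r * hact k H g' x)) :
    a ∉ WHset k H := by
  have hnext (x : {x // p x}) : ∃ y : {x // p x}, ∃ (g : H) (r : R) (g' : H),
      y.1 = hact k H g x.1 * r * hact k H g' x.1 :=
    let ⟨g, r, g', hx⟩ := step x.1 x.2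
    ⟨⟨_, hx⟩, g, r, g', rfl⟩
  choose next hnext using hnext
  intro hW
  obtain ⟨n, hn⟩ := mem_WHset_iff.1 hW (fun n => (next^[n] ⟨a, ha⟩).1) rfl fun n => by
    simpa only [Function.iterate_succ_apply'] using hnext _
  exact h0 (hn ▸ (next^[n] ⟨a, ha⟩).2)

lemma IsHPrimeIdeal.WHset_subset {P : Set R} (hP : IsHPrimeIdeal k H P) : WHset k H ⊆ P :=
  fun _ ha => by_contra fun haP => notMem_WHset_of_forall_exists (p := (· ∉ P)) haP
    (fun h => h hP.isHIdeal.zero_mem) (fun _ hx => hP.exists_hact_mul_hact_notMem hx hx) ha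

lemma isHPrimeIdeal_of_maximal {s : ℕ → R} (hs : IsHMSeq k H s) {P : Set R}
    (hP : Maximal (fun I => IsHIdeal k H I ∧ Disjoint I (Set.range s)) P) :
    IsHPrimeIdeal k H P := by
  obtain ⟨⟨hPid, hPs⟩, hmax⟩ := hP
  have hmeet {Q : Set R} (hQ : IsHIdeal k H Q) (hQP : ¬Q ⊆ P) : ∃ i, s i ∈ Q + P := by
    by_contra! hno
    refine hQP ((Set.subset_add_left Q hPid.zero_mem).trans (hmax ⟨hQ.add hPid, ?_⟩
      (Set.subset_add_right P hQ.zero_mem)))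
    exact Set.disjoint_right.2 fun _ ⟨i, hi⟩ => hi ▸ hno i
  refine ⟨hPid, fun {Q Q'} hQ hQ' hQQ' => ?_⟩
  by_contra! hnot
  obtain ⟨i, hi⟩ := hmeet hQ hnot.1
  obtain ⟨j, hj⟩ := hmeet hQ' hnot.2
  obtain ⟨g, r, g', hsucc⟩ := hs (max i j)
  obtain ⟨q, hq, p, hp, hqp⟩ :=
    (hQ.add hPid).hsmul_mem g (hs.mem_of_le (hQ.add hPid) hi (le_max_left i j))
  obtain ⟨q', hq', p', hp', hqp'⟩ :=
    (hQ'.add hPid).hsmul_mem g' (hs.mem_of_le (hQ'.add hPid) hj (le_max_right i j))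
  refine Set.disjoint_left.1 hPs ?_ ⟨max i j + 1, rfl⟩
  rw [hsucc, ← hqp, ← hqp',
    show (q + p) * r * (q' + p') = q * r * q' + (q * r * p' + p * r * (q' + p')) by noncomm_ring]
  exact hPid.add_mem (hQQ' q hq r q' hq') (hPid.add_mem (hPid.mul_mem_left _ hp')
    (hPid.mul_mem_right (hPid.mul_mem_right hp r) _))

lemma exists_isHPrimeIdeal_notMem {a : R} (ha : a ∉ WHset k H) :
    ∃ P, IsHPrimeIdeal k H P ∧ a ∉ P := by
  obtain ⟨s, rfl, hs, hs0⟩ : ∃ s, s 0 = a ∧ IsHMSeq k H s ∧ ∀ n, s n ≠ 0 := by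
    simpa [mem_WHset_iff] using ha
  obtain ⟨P, hP⟩ := exists_maximal_isHIdeal_disjoint (k := k) (H := H) (S := Set.range s)
    fun ⟨n, hn⟩ => hs0 n hn
  exact ⟨P, isHPrimeIdeal_of_maximal hs hP, fun h => Set.disjoint_left.1 hP.1.2 h ⟨0, rfl⟩⟩

lemma WHset_eq_sInter : WHset k H = ⋂₀ {P : Set R | IsHPrimeIdeal k H P} :=
  (Set.subset_sInter fun _ hP => IsHPrimeIdeal.WHset_subset hP).antisymm fun _ ha =>
    by_contra fun haW => let ⟨P, hP, haP⟩ := exists_isHPrimeIdeal_notMem haW; haP (ha P hP)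

lemma isHIdeal_WHset : IsHIdeal k H (WHset k H (R := R)) :=
  WHset_eq_sInter (k := k) (H := H) (R := R) ▸ isHIdeal_sInter fun _ hP => hP.isHIdeal

end Primes

section Radical

variable {k H R : Type*} [CommRing k] [Ring H] [Algebra k H] [Coalgebra k H]
  [NonUnitalRing R] [Module k R] [SMulCommClass k R R] [IsScalarTower k R R] [HModAlg k H R]

lemma IsHIdealIn.mul_mul_mem_of_mem_idealSpan {I K : Set R} (hI : IsHIdeal k H I)
    (hK : IsHIdealIn k H I K) {x y z : R} (hx : x ∈ I) (hy : y ∈ idealSpan Set.univ K)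
    (hz : z ∈ I) : x * y * z ∈ K := by
  induction hy using idealSpan_induction generalizing x z with
  | mem c hc => exact hK.mul_mem_right (hK.mul_mem_left hx hc) hz
  | zero => simpa using hK.zero_mem
  | add _ _ _ _ h₁ h₂ => simpa [mul_add, add_mul] using hK.add_mem (h₁ hx hz) (h₂ hx hz)
  | neg _ _ h => simpa using hK.neg_mem (h hx hz)
  | mul_left u _ _ _ h => simpa [mul_assoc] using h (hI.mul_mem_right hx u) hz
  | mul_right u _ _ _ h => simpa [mul_assoc] using h hx (hI.mul_mem_left u hz)

lemma IsRadicalHIdeal.subset_of_isHPrimeIdeal {I P : Set R} (hI : IsRadicalHIdeal k H I)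
    (hP : IsHPrimeIdeal k H P) : I ⊆ P := by
  obtain ⟨hIid, hrad⟩ := hI
  by_contra hIP
  obtain ⟨K, hK, hJK, hJK', n, hn⟩ :=
    hrad (P ∩ I) (hP.isHIdeal.inter hIid) fun h => hIP (Set.inter_eq_right.1 h)
  set A : Set R := (idealSpan Set.univ K : Set R)
  have hA : IsHIdeal k H A := isHIdealIn_idealSpan (isHIdeal_univ k H) (Set.subset_univ K)
    fun h _ hc => hK.hsmul_mem h hc
  have hAI : A ⊆ I := hIid.idealSpan_subset hK.subset
  -- Grouping factors in threes: `A` is nilpotent modulo `K`, hence modulo `P ∩ I`.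
  have hAP : A ⊆ P := hP.subset_of_isNilpotentSetMod hA ⟨3 * n + 2, fun f hf => by
    rw [prodSeq_three_mul_add_two]
    exact (hn _ fun i => hK.mul_mul_mem_of_mem_idealSpan hIid (hAI (hf _)) (hf _)
      (hAI (hf _))).1⟩
  exact hJK' (hJK.antisymm fun x hx => ⟨hAP (subset_idealSpan hx), hK.subset hx⟩)

lemma IsHIdealIn.isNilpotentSetMod_add {B J T : Set R} (hJ : IsHIdealIn k H B J)
    (hJT : J + T ⊆ B) (hT : ∀ t ∈ T, ∀ r, ∀ t' ∈ T, t * r * t' ∈ J) :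
    IsNilpotentSetMod (J + T) J := by
  refine ⟨2, fun f hf => ?_⟩
  obtain ⟨j, hj, t, ht, hx⟩ := hf 0
  obtain ⟨j', hj', t', ht', hz⟩ := hf 2
  have hyB : f 1 ∈ B := hJT (hf 1)
  have hzB : j' + t' ∈ B := hJT ⟨j', hj', t', ht', rfl⟩
  have htB : t ∈ B := hJT (Set.subset_add_right T hJ.zero_mem ht)
  change f 0 * f 1 * f 2 ∈ J
  rw [← hx, ← hz,
    show (j + t) * f 1 * (j' + t') = j * f 1 * (j' + t') + (t * (f 1 * j') + t * f 1 * t') by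
      noncomm_ring]
  exact hJ.add_mem (hJ.mul_mem_right (hJ.mul_mem_right hj hyB) hzB)
    (hJ.add_mem (hJ.mul_mem_left htB (hJ.mul_mem_left hyB hj')) (hT t ht _ t' ht'))

lemma exists_mem_WHset_forall_hact_mul_hact_mem {J : Set R} (hJ : IsHIdealIn k H (WHset k H) J)
    (hJW : J ≠ WHset k H) :
    ∃ a ∈ WHset k H, a ∉ J ∧ ∀ (g : H) (r : R) (g' : H), hact k H g a * r * hact k H g' a ∈ J := by
  have hW := isHIdeal_WHset (k := k) (H := H) (R := R)
  obtain ⟨a₀, ha₀W, ha₀J⟩ := Set.not_subset.1 fun h => hJW (hJ.subset.antisymm h)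
  by_contra! hno
  refine notMem_WHset_of_forall_exists (p := fun x => x ∈ WHset k H ∧ x ∉ J) ⟨ha₀W, ha₀J⟩
    (fun h => h.2 hJ.zero_mem) (fun x ⟨hxW, hxJ⟩ => ?_) ha₀W
  obtain ⟨g, r, g', h⟩ := hno x hxW hxJ
  exact ⟨g, r, g', hW.mul_mem_right (hW.mul_mem_right (hW.hsmul_mem g hxW) r) _, h⟩

lemma isRadicalHIdeal_WHset : IsRadicalHIdeal k H (WHset k H (R := R)) := by
  have hW := isHIdeal_WHset (k := k) (H := H) (R := R)
  refine ⟨hW, fun J hJ hJW => ?_⟩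
  obtain ⟨a, haW, haJ, ha⟩ := exists_mem_WHset_forall_hact_mul_hact_mem hJ hJW
  set T : Set R := (idealSpan (WHset k H) (hOrbit k H a) : Set R)
  have hT : IsHIdealIn k H (WHset k H) T := isHIdealIn_idealSpan hW
    (by rintro _ ⟨g, rfl⟩; exact hW.hsmul_mem g haW) fun h _ hc => hact_mem_hOrbit h hc
  have hK := hJ.add (fun _ hx _ hy => hW.add_mem hx hy) hT
  have haK : a ∈ J + T :=
    Set.subset_add_right T hJ.zero_mem (subset_idealSpan (mem_hOrbit_self a))
  refine ⟨J + T, hK, Set.subset_add_left J (zero_mem _), fun h => haJ (h ▸ haK),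
    hJ.isNilpotentSetMod_add hK.subset fun t ht r t' ht' => ?_⟩
  exact mul_mul_mem_of_mem_idealSpan (IsHIdealIn.toAddSubgroup hJ)
    (fun _ hu _ hx => hJ.mul_mem_left hu hx) (fun _ hx _ hu => hJ.mul_mem_right hx hu)
    (by rintro _ ⟨g, rfl⟩ r _ ⟨g', rfl⟩; exact ha g r g') ht r ht'

end Radical

/-- `r_{Hb}(R) = W_H(R)`. -/
theorem stmt10 {k H R : Type*} [CommRing k] [Ring H] [Algebra k H] [Coalgebra k H]
    [NonUnitalRing R] [Module k R] [SMulCommClass k R R] [IsScalarTower k R R]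
    [HModAlg k H R] (B : Set R) (hB : IsHBaerRadical k H B) :
    B = WHset k H (R := R) := by
  refine subset_antisymm (fun a ha => ?_) (hB.2 _ isRadicalHIdeal_WHset)
  rw [WHset_eq_sInter]
  exact fun P hP => hB.1.subset_of_isHPrimeIdeal hP ha
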